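/- The class of quasi-threshold graphs has unbounded linear clique-width: for every k there exists a quasi-threshold graph G with lcw(G) > k. -/

import Mathlib

/-! ## Common definitions

Linear clique-width (lcw) expressions and derived notions, following
Brignall–Lozin–Stacho, "Bichain graphs: geometric model and universal graphs" /
"Linear clique-width of subclasses of cographs".

An lcw expression over a label alphabet `L` is a list of operations:
insert a new vertex with a given label, add all edges between two distinct
label classes, or relabel one label class to another.  Vertices are indexed
by the natural numbers `0, 1, 2, …` in order of insertion. -/

/-- The three kinds of operations of an lcw expression. -/
inductive LcwOp (L : Type) where
  | insert : L → LcwOp L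
  | join : L → L → LcwOp L
  | relabel : L → L → LcwOp L

/-- The state while executing an lcw expression: the number `n` of vertices
inserted so far (the vertices are `0, …, n-1`), the adjacency relation built
so far, and the current labeling (`none` for indices not yet inserted). -/
structure LcwState (L : Type) where
  n : ℕ
  adj : ℕ → ℕ → Prop
  lab : ℕ → Option L

/-- The initial, empty state. -/
def LcwState.init (L : Type) : LcwState L :=
  ⟨0, fun _ _ => False, fun _ => none⟩

/-- Executing one operation. -/
def LcwState.step {L : Type} [DecidableEq L] (s : LcwState L) : LcwOp L → LcwState L
  | .insert a => ⟨s.n + 1, s.adj, fun v => if v = s.n then some a else s.lab v⟩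
  | .join i j =>
      ⟨s.n,
       fun u v => s.adj u v ∨
         (u ≠ v ∧ ((s.lab u = some i ∧ s.lab v = some j) ∨
                   (s.lab u = some j ∧ s.lab v = some i))),
       s.lab⟩
  | .relabel i j => ⟨s.n, s.adj, fun v => if s.lab v = some i then some j else s.lab v⟩

/-- Executing an lcw expression (a list of operations) from the empty state. -/
def runLcw {L : Type} [DecidableEq L] (e : List (LcwOp L)) : LcwState L :=
  e.foldl LcwState.step (LcwState.init L)

/-- Well-formedness: every edge-adding operation uses two distinct labels. -/
def WfExpr {L : Type} (e : List (LcwOp L)) : Prop :=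
  ∀ op ∈ e, ∀ i j : L, op = LcwOp.join i j → i ≠ j

/-- The expression `e` builds the graph `G`, where the bijection
`f` sends each vertex of `G` to its insertion index (so `f` records the
insertion order of the vertices). -/
def BuildsVia {L V : Type} [DecidableEq L] [Fintype V] (e : List (LcwOp L))
    (G : SimpleGraph V) (f : V → ℕ) : Prop :=
  WfExpr e ∧ Function.Injective f ∧ (runLcw e).n = Fintype.card V ∧
    (∀ v, f v < (runLcw e).n) ∧ ∀ u v, G.Adj u v ↔ (runLcw e).adj (f u) (f v)

/-- The expression `e` builds the graph `G`. -/
def Builds {L V : Type} [DecidableEq L] [Fintype V] (e : List (LcwOp L))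
    (G : SimpleGraph V) : Prop :=
  ∃ f : V → ℕ, BuildsVia e G f

/-- The linear clique-width of a finite graph: the least size of a label
alphabet over which some lcw expression builds `G`.  (An expression over
`Fin k` is an expression using `k` labels; an *efficient* expression for `G`
is one over `Fin (lcw G)`.) -/
noncomputable def lcw {V : Type} [Fintype V] (G : SimpleGraph V) : ℕ :=
  sInf {k : ℕ | ∃ e : List (LcwOp (Fin k)), Builds e G}

/-- `ℓ` is a sink label of the expression `e`: it is never used in an
edge-adding operation and vertices labeled `ℓ` are never relabeled. -/
def SinkLabel {L : Type} (e : List (LcwOp L)) (ℓ : L) : Prop :=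
  (∀ op ∈ e, ∀ i j : L, op = LcwOp.join i j → i ≠ ℓ ∧ j ≠ ℓ) ∧
  (∀ op ∈ e, ∀ j : L, op = LcwOp.relabel ℓ j → j = ℓ)

/-- An expression is sink-free if no label is a sink label. -/
def SinkFree {L : Type} (e : List (LcwOp L)) : Prop :=
  ∀ ℓ : L, ¬ SinkLabel e ℓ

/-- The disjoint union of two graphs. -/
def GraphDisjUnion {V W : Type} (G : SimpleGraph V) (H : SimpleGraph W) :
    SimpleGraph (V ⊕ W) where
  Adj x y :=
    match x, y with
    | Sum.inl a, Sum.inl b => G.Adj a b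
    | Sum.inr a, Sum.inr b => H.Adj a b
    | _, _ => False
  symm := by
    constructor
    rintro (a | a) (b | b) h
    · exact G.adj_symm h
    · exact h.elim
    · exact h.elim
    · exact H.adj_symm h
  loopless := by
    constructor
    rintro (a | a) h
    · exact G.irrefl h
    · exact H.irrefl h

/-- The join of two graphs: their disjoint union together with all edges
between the two sides. -/
def GraphJoin {V W : Type} (G : SimpleGraph V) (H : SimpleGraph W) :
    SimpleGraph (V ⊕ W) :=
  (GraphDisjUnion Gᶜ Hᶜ)ᶜ

/-- `H` is (isomorphic to) an induced subgraph of `G`. -/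
def InducedSubgraphOf {W V : Type} (H : SimpleGraph W) (G : SimpleGraph V) : Prop :=
  ∃ f : W ↪ V, ∀ a b : W, H.Adj a b ↔ G.Adj (f a) (f b)

/-- The path `P₄` on four vertices (edges 01, 12, 23). -/
def pathP4 : SimpleGraph (Fin 4) :=
  SimpleGraph.fromRel (fun a b => (b : ℕ) = (a : ℕ) + 1)

/-- The cycle `C₄` on four vertices (edges 01, 12, 23, 30). -/
def cycleC4 : SimpleGraph (Fin 4) :=
  SimpleGraph.fromRel (fun a b => (b : ℕ) = (a : ℕ) + 1 ∨ ((a : ℕ) = 3 ∧ (b : ℕ) = 0))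

/-- The graph `2K₂` (edges 01 and 23). -/
def twoK2 : SimpleGraph (Fin 4) :=
  SimpleGraph.fromRel (fun a b => ((a : ℕ) = 0 ∧ (b : ℕ) = 1) ∨ ((a : ℕ) = 2 ∧ (b : ℕ) = 3))

/-- Cographs: the graphs with no induced `P₄`. -/
def IsCograph {V : Type} (G : SimpleGraph V) : Prop :=
  ¬ InducedSubgraphOf pathP4 G

/-- Quasi-threshold (trivially perfect) graphs: no induced `P₄` and no induced `C₄`. -/
def IsQuasiThreshold {V : Type} (G : SimpleGraph V) : Prop :=
  ¬ InducedSubgraphOf pathP4 G ∧ ¬ InducedSubgraphOf cycleC4 G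

/-- Threshold graphs: no induced `P₄`, `C₄` or `2K₂`. -/
def IsThreshold {V : Type} (G : SimpleGraph V) : Prop :=
  ¬ InducedSubgraphOf pathP4 G ∧ ¬ InducedSubgraphOf cycleC4 G ∧ ¬ InducedSubgraphOf twoK2 G

/-- A finite graph, encoded with vertex set `Fin n`.  A *class* of graphs,
i.e. a set of finite graphs closed under isomorphism, is modelled as a
hereditary set of `FinGraph`s (hereditary sets are automatically closed
under isomorphism). -/
def FinGraph : Type := Σ n : ℕ, SimpleGraph (Fin n)

/-- The complement of a finite graph. -/
def FinGraph.compl (G : FinGraph) : FinGraph := ⟨G.1, G.2ᶜ⟩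

/-- The induced-subgraph order on finite graphs. -/
def IndF (H G : FinGraph) : Prop := InducedSubgraphOf H.2 G.2

/-- A set of finite graphs is hereditary if it is closed downward under the
induced subgraph order (in particular it is closed under isomorphism). -/
def Hereditary (C : Set FinGraph) : Prop :=
  ∀ G ∈ C, ∀ H : FinGraph, IndF H G → H ∈ C

/-- The finite graph `K` is isomorphic to the graph `G`. -/
def IsoTo {V : Type} (K : FinGraph) (G : SimpleGraph V) : Prop :=
  ∃ e : Fin K.1 ≃ V, ∀ a b, K.2.Adj a b ↔ G.Adj (e a) (e b)

/-- The class `C` contains (a copy of) the graph `G`. -/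
def MemUpToIso (C : Set FinGraph) {V : Type} (G : SimpleGraph V) : Prop :=
  ∃ K ∈ C, IsoTo K G

/-- `C` is closed under disjoint unions. -/
def ClosedUnderDisjointUnions (C : Set FinGraph) : Prop :=
  ∀ G ∈ C, ∀ H ∈ C, MemUpToIso C (GraphDisjUnion (Sigma.snd G) (Sigma.snd H))

/-- `C` is closed under joins. -/
def ClosedUnderJoins (C : Set FinGraph) : Prop :=
  ∀ G ∈ C, ∀ H ∈ C, MemUpToIso C (GraphJoin (Sigma.snd G) (Sigma.snd H))

/-- `C` is atomic: it cannot be written as the union of two proper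
hereditary subclasses. -/
def AtomicClass (C : Set FinGraph) : Prop :=
  ¬ ∃ D₁ D₂ : Set FinGraph, Hereditary D₁ ∧ Hereditary D₂ ∧
      D₁ ⊂ C ∧ D₂ ⊂ C ∧ C = D₁ ∪ D₂

/-- The inflation `G[H₁, …, Hₙ]` of a graph `G` on `Fin n` by graphs
`H i` (`i : Fin n`): substitute `H i` for the vertex `i` of `G`. -/
def inflate {n : ℕ} (G : SimpleGraph (Fin n)) (m : Fin n → ℕ)
    (H : ∀ i : Fin n, SimpleGraph (Fin (m i))) :
    SimpleGraph (Σ i : Fin n, Fin (m i)) where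
  Adj x y := (x.1 ≠ y.1 ∧ G.Adj x.1 y.1) ∨ ∃ h : x.1 = y.1, (H y.1).Adj (h ▸ x.2) y.2
  symm := by
    constructor
    rintro ⟨i, a⟩ ⟨j, b⟩ (⟨hne, hadj⟩ | ⟨h, hadj⟩)
    · exact Or.inl ⟨hne.symm, G.adj_symm hadj⟩
    · cases h
      exact Or.inr ⟨rfl, (H i).adj_symm hadj⟩
  loopless := by
    constructor
    rintro ⟨i, a⟩ (⟨hne, _⟩ | ⟨h, hadj⟩)
    · exact hne rfl
    · exact (H i).irrefl hadj

/-- The inflation `C[D]` of the class `C` by the class `D`: all graphs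
isomorphic to an inflation of a graph of `C` by graphs of `D`. -/
def classInflate (C D : Set FinGraph) : Set FinGraph :=
  {K | ∃ (n : ℕ) (G : SimpleGraph (Fin n)) (m : Fin n → ℕ)
        (H : ∀ i : Fin n, SimpleGraph (Fin (m i))),
      (⟨n, G⟩ : FinGraph) ∈ C ∧ (∀ i, (⟨m i, H i⟩ : FinGraph) ∈ D) ∧
      IsoTo K (inflate G m H)}

/-- The class of threshold graphs (as finite graphs). -/
def thresholdClass : Set FinGraph := {G : FinGraph | IsThreshold G.2}

/-- Vertex types of the sequence witnessing unbounded linear clique-width: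
`qtV 0` carries `G₁ = K₂` and `qtV (k+1)` carries
`G_{k+2} = K₁ ∗ ((G_{k+1} ∪ G_{k+1}) ∪ (G_{k+1} ∪ G_{k+1}))`. -/
def qtV : ℕ → Type
  | 0 => Fin 2
  | k + 1 => Unit ⊕ ((qtV k ⊕ qtV k) ⊕ (qtV k ⊕ qtV k))

instance qtVFintype : ∀ k : ℕ, Fintype (qtV k)
  | 0 => inferInstanceAs (Fintype (Fin 2))
  | k + 1 =>
      letI := qtVFintype k
      inferInstanceAs (Fintype (Unit ⊕ ((qtV k ⊕ qtV k) ⊕ (qtV k ⊕ qtV k))))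

/-- The graphs `G₁, G₂, …` of the paper, reindexed so that `qtG k = G_{k+1}`:
`qtG 0 = K₂` and `qtG (k+1) = K₁ ∗ ((qtG k ∪ qtG k) ∪ (qtG k ∪ qtG k))`. -/
def qtG : ∀ k : ℕ, SimpleGraph (qtV k)
  | 0 => (⊤ : SimpleGraph (Fin 2))
  | k + 1 =>
      GraphJoin (⊥ : SimpleGraph Unit)
        (GraphDisjUnion (GraphDisjUnion (qtG k) (qtG k)) (GraphDisjUnion (qtG k) (qtG k)))

/-!
The graphs `qtG k` are built from `K₂` by repeatedly taking a new apex joined to four disjoint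
copies. They are quasi-threshold because `P₄` and `C₄` are connected (so an induced copy lies in
one component of a disjoint union) and have no dominating vertex (so it avoids the apex).

For the lower bound, call `G` `m`-hard if for every insertion order there is a moment `p` and
`m` vertices inserted before `p` that have a common neighbour inserted after `p` and are pairwise
separated by vertices inserted after `p`. In an lcw expression these vertices carry pairwise
distinct labels at time `p`, because two vertices with equal labels are never separated
afterwards. `K₂` is `1`-hard, and an apex over three copies of an `m`-hard graph is
`(m+1)`-hard: of the three thresholds two lie on the same side of the apex, and this forces
one copy whose separated set can be extended by the apex or by a vertex of another copy.
-/

open SimpleGraph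

section Graphs

variable {U V W : Type} {F : SimpleGraph U} {G : SimpleGraph V} {H : SimpleGraph W}

theorem inducedSubgraphOf_iff_nonempty_embedding :
    InducedSubgraphOf F G ↔ Nonempty (F ↪g G) :=
  ⟨fun ⟨f, hf⟩ => ⟨⟨f, (hf _ _).symm⟩⟩,
    fun ⟨φ⟩ => ⟨φ.toEmbedding, fun _ _ => φ.map_adj_iff.symm⟩⟩

theorem InducedSubgraphOf.trans_embedding (h : InducedSubgraphOf F G) (φ : G ↪g H) :
    InducedSubgraphOf F H := by
  rw [inducedSubgraphOf_iff_nonempty_embedding] at h ⊢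
  exact h.map (·.trans φ)

theorem nonempty_embedding_of_forall_exists_eq (φ : F ↪g H) (ι : G ↪g H)
    (h : ∀ x, ∃ a, ι a = φ x) : Nonempty (F ↪g G) := by
  choose g hg using h
  refine ⟨⟨⟨g, fun x y hxy => φ.injective ?_⟩, fun {x y} => ?_⟩⟩
  · rw [← hg x, ← hg y, hxy]
  · show G.Adj (g x) (g y) ↔ F.Adj x y
    rw [← ι.map_adj_iff, hg x, hg y, φ.map_adj_iff]

theorem graphDisjUnion_eq_sum : GraphDisjUnion G H = G ⊕g H := by
  ext (a | a) (b | b) <;> simp [GraphDisjUnion]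

@[simp] theorem graphDisjUnion_adj_inl_inl {a b : V} :
    (GraphDisjUnion G H).Adj (.inl a) (.inl b) ↔ G.Adj a b := Iff.rfl

@[simp] theorem graphDisjUnion_adj_inr_inr {a b : W} :
    (GraphDisjUnion G H).Adj (.inr a) (.inr b) ↔ H.Adj a b := Iff.rfl

@[simp] theorem graphDisjUnion_adj_inl_inr {a : V} {b : W} :
    ¬ (GraphDisjUnion G H).Adj (.inl a) (.inr b) := id

@[simp] theorem graphDisjUnion_adj_inr_inl {a : W} {b : V} :
    ¬ (GraphDisjUnion G H).Adj (.inr a) (.inl b) := id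

@[simp] theorem graphJoin_adj_inl_inr {a : V} {b : W} : (GraphJoin G H).Adj (.inl a) (.inr b) := by
  simp [GraphJoin]

@[simp] theorem graphJoin_adj_inr_inr {a b : W} :
    (GraphJoin G H).Adj (.inr a) (.inr b) ↔ H.Adj a b := by
  have : H.Adj a b → a ≠ b := H.ne_of_adj
  simp only [GraphJoin, compl_adj, graphDisjUnion_adj_inr_inr, ne_eq, Sum.inr.injEq]
  tauto

def graphJoinInr : H ↪g GraphJoin G H where
  toEmbedding := .inr
  map_rel_iff' := graphJoin_adj_inr_inr

variable (G) in
def threeCopies : boxProd (⊥ : SimpleGraph (Fin 3)) G ↪g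
    GraphDisjUnion (GraphDisjUnion G G) (GraphDisjUnion G G) where
  toFun x := ![.inl (.inl x.2), .inl (.inr x.2), .inr (.inl x.2)] x.1
  inj' := by
    rintro ⟨i, a⟩ ⟨j, b⟩ h
    fin_cases i <;> fin_cases j <;> simp_all
  map_rel_iff' {x y} := by
    obtain ⟨i, a⟩ := x
    obtain ⟨j, b⟩ := y
    show (GraphDisjUnion _ _).Adj (![_, _, _] i) (![_, _, _] j) ↔ _
    fin_cases i <;> fin_cases j <;> simp

theorem SimpleGraph.Connected.nonempty_embedding_sum (hF : F.Connected) (φ : F ↪g G ⊕g H) :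
    Nonempty (F ↪g G) ∨ Nonempty (F ↪g H) := by
  obtain ⟨x₀⟩ := hF.nonempty
  have reach x : (G ⊕g H).Reachable (φ x₀) (φ x) := (hF.preconnected x₀ x).map φ.toHom
  rcases h₀ : φ x₀ with a | a
  · refine .inl (nonempty_embedding_of_forall_exists_eq φ Embedding.sumInl fun x => ?_)
    have := reach x
    rcases hx : φ x with b | b
    · exact ⟨b, rfl⟩
    · rw [h₀, hx] at this; exact absurd this (not_reachable_sum_inl_inr _ _)
  · refine .inr (nonempty_embedding_of_forall_exists_eq φ Embedding.sumInr fun x => ?_)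
    have := reach x
    rcases hx : φ x with b | b
    · rw [h₀, hx] at this; exact absurd this.symm (not_reachable_sum_inl_inr _ _)
    · exact ⟨b, rfl⟩

theorem not_inducedSubgraphOf_graphDisjUnion (hF : F.Connected) (hG : ¬ InducedSubgraphOf F G)
    (hH : ¬ InducedSubgraphOf F H) : ¬ InducedSubgraphOf F (GraphDisjUnion G H) := by
  simp only [inducedSubgraphOf_iff_nonempty_embedding, graphDisjUnion_eq_sum, not_nonempty_iff]
    at hG hH ⊢
  exact ⟨fun φ => (hF.nonempty_embedding_sum φ).elim (·.elim hG.elim) (·.elim hH.elim)⟩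

/-- The apex would be a dominating vertex of the copy of `F`. -/
theorem not_inducedSubgraphOf_graphJoin_unit (hF : ∀ a, ∃ b ≠ a, ¬ F.Adj a b)
    (hH : ¬ InducedSubgraphOf F H) :
    ¬ InducedSubgraphOf F (GraphJoin (⊥ : SimpleGraph Unit) H) := by
  simp only [inducedSubgraphOf_iff_nonempty_embedding, not_nonempty_iff] at hH ⊢
  refine ⟨fun φ => hH.elim
    (nonempty_embedding_of_forall_exists_eq φ graphJoinInr fun a => ?_).some⟩
  rcases ha : φ a with ⟨⟩ | x
  · exfalso
    obtain ⟨b, hba, hab⟩ := hF a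
    rcases hb : φ b with ⟨⟩ | y
    · exact hba (φ.injective (hb.trans ha.symm))
    · exact hab (φ.map_adj_iff.1 (by rw [ha, hb]; exact graphJoin_adj_inl_inr))
  · exact ⟨x, rfl⟩

end Graphs

section QuasiThreshold

variable {U V : Type} {F : SimpleGraph U} {G : SimpleGraph V}

theorem pathP4_eq_pathGraph : pathP4 = pathGraph 4 := by
  ext a b
  simp only [pathP4, fromRel_adj, pathGraph_adj, ne_eq, Fin.ext_iff]
  omega

theorem pathP4_connected : pathP4.Connected :=
  pathP4_eq_pathGraph ▸ pathGraph_connected 3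

theorem pathP4_le_cycleC4 : pathP4 ≤ cycleC4 := fun a b h => by
  simp only [pathP4, cycleC4, fromRel_adj] at h ⊢
  tauto

theorem cycleC4_connected : cycleC4.Connected :=
  pathP4_connected.mono pathP4_le_cycleC4

/-- Opposite vertices of the square are non-adjacent in both `P₄` and `C₄`. -/
theorem exists_ne_not_adj_of_le_cycleC4 {F : SimpleGraph (Fin 4)} (hF : F ≤ cycleC4) (a : Fin 4) :
    ∃ b ≠ a, ¬ F.Adj a b :=
  ⟨a + 2, by fin_cases a <;> decide,
    fun h => by have := hF h; fin_cases a <;> simp [cycleC4] at this⟩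

theorem not_inducedSubgraphOf_qtG [Fintype U] (hU : 2 < Fintype.card U) (hF : F.Connected)
    (hdom : ∀ a, ∃ b ≠ a, ¬ F.Adj a b) : ∀ k, ¬ InducedSubgraphOf F (qtG k)
  | 0 => fun ⟨f, _⟩ => by
      have : Fintype.card U ≤ Fintype.card (Fin 2) := Fintype.card_le_of_embedding f
      simp at this; omega
  | k + 1 => by
      have ih := not_inducedSubgraphOf_qtG hU hF hdom k
      exact not_inducedSubgraphOf_graphJoin_unit hdom <|
        not_inducedSubgraphOf_graphDisjUnion hF (not_inducedSubgraphOf_graphDisjUnion hF ih ih)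
          (not_inducedSubgraphOf_graphDisjUnion hF ih ih)

theorem qtG_isQuasiThreshold (k : ℕ) : IsQuasiThreshold (qtG k) :=
  ⟨not_inducedSubgraphOf_qtG (by simp) pathP4_connected
      (exists_ne_not_adj_of_le_cycleC4 pathP4_le_cycleC4) k,
    not_inducedSubgraphOf_qtG (by simp) cycleC4_connected
      (exists_ne_not_adj_of_le_cycleC4 le_rfl) k⟩

theorem IsQuasiThreshold.of_embedding (hG : IsQuasiThreshold G) (φ : F ↪g G) :
    IsQuasiThreshold F :=
  ⟨fun h => hG.1 (h.trans_embedding φ), fun h => hG.2 (h.trans_embedding φ)⟩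

end QuasiThreshold

namespace LcwState

variable {L : Type}

structure Consistent (s : LcwState L) : Prop where
  isSome_lab_iff : ∀ x, (s.lab x).isSome ↔ x < s.n
  lt_of_adj : ∀ x y, s.adj x y → y < s.n

theorem consistent_init : (init L).Consistent :=
  ⟨fun x => by simp [init], fun _ _ h => h.elim⟩

variable [DecidableEq L] {s : LcwState L}

theorem Consistent.step (hs : s.Consistent) (op : LcwOp L) : (s.step op).Consistent := by
  obtain ⟨hlab, hadj⟩ := hs
  cases op with
  | insert a =>
    refine ⟨fun x => ?_, fun x y h => Nat.lt_succ_of_lt (hadj x y h)⟩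
    by_cases hx : x = s.n
    · simp [LcwState.step, hx]
    · simp only [LcwState.step, hx, if_false, hlab]
      omega
  | join i j =>
    refine ⟨hlab, fun x y h => ?_⟩
    rcases h with h | ⟨-, ⟨-, hy⟩ | ⟨-, hy⟩⟩
    · exact hadj x y h
    all_goals exact (hlab y).1 (by simp [hy])
  | relabel i j =>
    refine ⟨fun x => ?_, hadj⟩
    by_cases hx : s.lab x = some i
    · simp [LcwState.step, hx, ← hlab x]
    · simp [LcwState.step, hx, hlab]

theorem n_le_step (s : LcwState L) (op : LcwOp L) : s.n ≤ (s.step op).n := by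
  cases op <;> simp [LcwState.step]

theorem step_n_le_succ (s : LcwState L) (op : LcwOp L) : (s.step op).n ≤ s.n + 1 := by
  cases op <;> simp [LcwState.step]

theorem step_lab_eq_of_lab_eq {u v : ℕ} (hu : u < s.n) (hv : v < s.n) (h : s.lab u = s.lab v)
    (op : LcwOp L) : (s.step op).lab u = (s.step op).lab v := by
  cases op <;> simp [LcwState.step, h, hu.ne, hv.ne]

theorem step_adj_iff_of_lab_eq {u v w : ℕ} (h : s.lab u = s.lab v) (huw : u ≠ w) (hvw : v ≠ w)
    (hadj : s.adj u w ↔ s.adj v w) (op : LcwOp L) :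
    (s.step op).adj u w ↔ (s.step op).adj v w := by
  cases op <;> simp [LcwState.step, h, huw, hvw, hadj]

theorem foldl_adj_iff_of_lab_eq (e : List (LcwOp L)) {u v w : ℕ} (hu : u < s.n) (hv : v < s.n)
    (h : s.lab u = s.lab v) (huw : u ≠ w) (hvw : v ≠ w) (hadj : s.adj u w ↔ s.adj v w) :
    (e.foldl step s).adj u w ↔ (e.foldl step s).adj v w := by
  induction e generalizing s with
  | nil => exact hadj
  | cons op e ih =>
    exact ih (hu.trans_le (n_le_step s op)) (hv.trans_le (n_le_step s op))
      (step_lab_eq_of_lab_eq hu hv h op) (step_adj_iff_of_lab_eq h huw hvw hadj op)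

end LcwState

section Run

variable {L : Type} [DecidableEq L]

theorem runLcw_append (e₁ e₂ : List (LcwOp L)) :
    runLcw (e₁ ++ e₂) = e₂.foldl LcwState.step (runLcw e₁) :=
  List.foldl_append

theorem runLcw_concat (e : List (LcwOp L)) (op : LcwOp L) :
    runLcw (e ++ [op]) = (runLcw e).step op := by
  simp [runLcw_append]

theorem consistent_runLcw (e : List (LcwOp L)) : (runLcw e).Consistent := by
  induction e using List.reverseRecOn with
  | nil => exact LcwState.consistent_init
  | append_singleton e op ih => rw [runLcw_concat]; exact ih.step op

theorem exists_prefix_runLcw_n_eq (e : List (LcwOp L)) {p : ℕ} (hp : p ≤ (runLcw e).n) :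
    ∃ e₁ e₂, e = e₁ ++ e₂ ∧ (runLcw e₁).n = p := by
  induction e using List.reverseRecOn with
  | nil => exact ⟨[], [], rfl, by simp_all [runLcw, LcwState.init]⟩
  | append_singleton e op ih =>
    rw [runLcw_concat] at hp
    by_cases hpe : p ≤ (runLcw e).n
    · obtain ⟨e₁, e₂, rfl, he₁⟩ := ih hpe
      exact ⟨e₁, e₂ ++ [op], by simp, he₁⟩
    · refine ⟨e ++ [op], [], by simp, ?_⟩
      have := (runLcw e).step_n_le_succ op
      rw [runLcw_concat]
      omega

end Run

section Construction

variable {L V : Type} [DecidableEq L]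

theorem runLcw_map_insert (ℓs : List L) :
    runLcw (ℓs.map .insert) = ⟨ℓs.length, fun _ _ => False, fun i => ℓs[i]?⟩ := by
  induction ℓs using List.reverseRecOn with
  | nil => simp [runLcw, LcwState.init]
  | append_singleton ℓs ℓ ih =>
    rw [List.map_append, List.map_singleton, runLcw_concat, ih]
    simp only [LcwState.step, List.length_append, List.length_singleton, LcwState.mk.injEq,
      true_and]
    funext i
    rcases lt_trichotomy i ℓs.length with hi | rfl | hi
    · simp [hi.ne, List.getElem?_append_left hi]
    · simp
    · simp [hi.ne', List.getElem?_eq_none (by omega : ℓs.length ≤ i),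
        List.getElem?_eq_none (by simp; omega : (ℓs ++ [ℓ]).length ≤ i)]

theorem foldl_map_join (ps : List (L × L)) (s : LcwState L) :
    (ps.map fun q => LcwOp.join q.1 q.2).foldl LcwState.step s =
      ⟨s.n, fun u v => s.adj u v ∨ ∃ q ∈ ps, u ≠ v ∧
        ((s.lab u = some q.1 ∧ s.lab v = some q.2) ∨
          (s.lab u = some q.2 ∧ s.lab v = some q.1)), s.lab⟩ := by
  induction ps generalizing s with
  | nil => simp
  | cons q ps ih =>
    simp only [List.map_cons, List.foldl_cons, ih, LcwState.step, List.mem_cons,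
      exists_eq_or_imp, or_assoc]

/-- Give every vertex its own label, then join the labels of adjacent vertices. -/
theorem exists_builds_of_embedding [Fintype V] (G : SimpleGraph V) (φ : V ↪ L) :
    ∃ e : List (LcwOp L), Builds e G := by
  classical
  let σ := Fintype.equivFin V
  let ℓs := List.ofFn (φ ∘ σ.symm)
  let ps := (Finset.univ.filter fun q : V × V => G.Adj q.1 q.2).toList.map (Prod.map φ φ)
  have hrun : runLcw (ℓs.map .insert ++ ps.map fun q => .join q.1 q.2) =
      ⟨Fintype.card V, fun u v => False ∨ ∃ q ∈ ps, u ≠ v ∧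
        ((ℓs[u]? = some q.1 ∧ ℓs[v]? = some q.2) ∨
          (ℓs[u]? = some q.2 ∧ ℓs[v]? = some q.1)), fun i => ℓs[i]?⟩ := by
    rw [runLcw_append, runLcw_map_insert, foldl_map_join, List.length_ofFn]
  have hlab : ∀ v, ℓs[(σ v : ℕ)]? = some (φ v) := fun v => by simp [ℓs]
  refine ⟨_, fun v => σ v, ?_, fun u v h => σ.injective (Fin.ext h), by rw [hrun],
    fun v => by simp [hrun], fun u v => ?_⟩
  · intro op hop i j rfl
    simp only [List.mem_append, List.mem_map, ps, Finset.mem_toList, Finset.mem_filter] at hop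
    obtain ⟨_, _, ⟨⟩⟩ | ⟨_, ⟨⟨x, y⟩, ⟨-, hxy⟩, rfl⟩, ⟨⟩⟩ := hop
    exact φ.injective.ne hxy.ne
  · simp only [hrun, hlab, ps, List.mem_map, Finset.mem_toList, Finset.mem_filter,
      Finset.mem_univ, true_and, false_or, ne_eq, Fin.val_inj, σ.injective.eq_iff,
      Option.some_inj]
    constructor
    · intro h
      exact ⟨_, ⟨(u, v), h, rfl⟩, h.ne, .inl ⟨rfl, rfl⟩⟩
    · rintro ⟨_, ⟨⟨x, y⟩, hxy, rfl⟩, -, h⟩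
      simp only [Prod.map_fst, Prod.map_snd, φ.injective.eq_iff] at h
      rcases h with ⟨rfl, rfl⟩ | ⟨rfl, rfl⟩
      exacts [hxy, hxy.symm]

end Construction

section Hard

variable {V W : Type} {G : SimpleGraph V} {G' : SimpleGraph W} {m : ℕ}

structure HardAt (G : SimpleGraph V) (f : V → ℕ) (p : ℕ) (S : Finset V) : Prop where
  lt : ∀ a ∈ S, f a < p
  common_adj : ∃ w, p ≤ f w ∧ ∀ a ∈ S, G.Adj a w
  separated : ∀ a ∈ S, ∀ b ∈ S, a ≠ b →
    ∃ w, p ≤ f w ∧ ¬ (G.Adj a w ↔ G.Adj b w)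

def Hard (G : SimpleGraph V) (m : ℕ) : Prop :=
  ∀ f : V → ℕ, Function.Injective f → ∃ p S, S.card = m ∧ HardAt G f p S

theorem HardAt.map {f : W → ℕ} {p : ℕ} {S : Finset V} (φ : G ↪g G')
    (h : HardAt G (f ∘ φ) p S) : HardAt G' f p (S.map φ.toEmbedding) := by
  obtain ⟨hlt, ⟨w, hw, hSw⟩, hsep⟩ := h
  refine ⟨by simpa using hlt, ⟨φ w, hw, by simpa using hSw⟩, ?_⟩
  simp only [Finset.mem_map, RelEmbedding.coe_toEmbedding, ne_eq, forall_exists_index, and_imp]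
  rintro _ a ha rfl _ b hb rfl hab
  obtain ⟨w, hw, hne⟩ := hsep a ha b hb (fun h => hab (h ▸ rfl))
  exact ⟨φ w, hw, by simpa using hne⟩

theorem HardAt.insert [DecidableEq V] {f : V → ℕ} {p : ℕ} {S : Finset V} {x : V}
    (h : HardAt G f p S) (hx : f x < p)
    (hcommon : ∃ w, p ≤ f w ∧ G.Adj x w ∧ ∀ a ∈ S, G.Adj a w)
    (hsep : ∀ a ∈ S, ∃ w, p ≤ f w ∧ ¬ (G.Adj x w ↔ G.Adj a w)) :
    HardAt G f p (insert x S) := by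
  obtain ⟨w, hw, hxw, hSw⟩ := hcommon
  refine ⟨by simpa [hx] using h.lt, ⟨w, hw, by simpa [hxw] using hSw⟩, ?_⟩
  simp only [Finset.mem_insert]
  rintro a (rfl | ha) b (rfl | hb) hab
  · exact absurd rfl hab
  · exact hsep b hb
  · obtain ⟨w, hw, hne⟩ := hsep a ha
    exact ⟨w, hw, fun h => hne h.symm⟩
  · exact h.separated a ha b hb hab

theorem Hard.of_embedding (φ : G ↪g G') (h : Hard G m) : Hard G' m := fun f hf => by
  obtain ⟨p, S, hS, hp⟩ := h (f ∘ φ) (hf.comp φ.injective)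
  exact ⟨p, S.map φ.toEmbedding, by simpa using hS, hp.map φ⟩

theorem hard_one_of_adj {x y : V} (h : G.Adj x y) : Hard G 1 := by
  intro f hf
  wlog hxy : f x < f y generalizing x y
  · exact this h.symm (lt_of_le_of_ne (not_lt.1 hxy) (hf.ne h.ne.symm))
  exact ⟨f x + 1, {x}, rfl, by simp, ⟨y, hxy, by simpa using h⟩, by simp⟩

theorem exists_threshold_crossing {V : Type} (t : ℕ) (p : Fin 3 → ℕ) (g : Fin 3 → V → ℕ)
    (hlow : ∀ i, ∃ a, g i a < p i) (hhigh : ∀ i, ∃ w, p i ≤ g i w) :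
    ∃ i j b, j ≠ i ∧ ((t < p i ∧ p i ≤ g j b) ∨ (p i ≤ t ∧ g j b < p i)) := by
  by_contra! h
  obtain ⟨i, j, hij, hside⟩ :=
    Fintype.exists_ne_map_eq_of_card_lt (fun i => decide (t < p i)) (by simp)
  obtain ⟨a, ha⟩ := hlow i
  obtain ⟨b, hb⟩ := hlow j
  obtain ⟨w, hw⟩ := hhigh i
  obtain ⟨w', hw'⟩ := hhigh j
  by_cases hti : t < p i
  · have htj : t < p j := by simpa [hti] using hside.symm
    have := (h i j w' hij.symm).1 hti
    have := (h j i w hij).1 htj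
    omega
  · have htj : ¬ t < p j := by simpa [hti] using hside.symm
    have := (h i j b hij.symm).2 (not_lt.1 hti)
    have := (h j i a hij).2 (not_lt.1 htj)
    omega

theorem Hard.cone (hm : 0 < m) (hG : Hard G m) (r : W)
    (ψ : boxProd (⊥ : SimpleGraph (Fin 3)) G ↪g G') (hr : ∀ x, G'.Adj r (ψ x)) :
    Hard G' (m + 1) := by
  classical
  intro f hf
  let e i : G ↪g G' := (boxProdRight ⊥ G i).trans ψ
  have cross {i j : Fin 3} (hij : i ≠ j) (a b : V) : ¬ G'.Adj (e i a) (e j b) := by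
    simp [e, hij]
  choose p S hS hSat using fun i => hG (f ∘ e i) (hf.comp (e i).injective)
  choose w hw hSw using fun i => (hSat i).common_adj
  have hcard i {x : W} (hx : ∀ a ∈ S i, e i a ≠ x) :
      (insert x ((S i).map (e i).toEmbedding)).card = m + 1 := by
    rw [Finset.card_insert_of_notMem (by simpa using hx), Finset.card_map, hS]
  have hlow i : ∃ a, f (e i a) < p i := by
    obtain ⟨a, ha⟩ := Finset.card_pos.1 (hS i ▸ hm)
    exact ⟨a, (hSat i).lt a ha⟩
  obtain ⟨i, j, b, hji, ⟨hri, hb⟩ | ⟨hri, hb⟩⟩ :=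
    exists_threshold_crossing (f r) p (fun i a => f (e i a)) hlow fun i => ⟨w i, hw i⟩
  · refine ⟨p i, _, hcard i fun a _ h => (hr (i, a)).ne h.symm,
      ((hSat i).map (e i)).insert hri ⟨e i (w i), hw i, hr _, by simpa using hSw i⟩ ?_⟩
    simp only [Finset.mem_map, RelEmbedding.coe_toEmbedding, forall_exists_index, and_imp]
    rintro _ a - rfl
    exact ⟨e j b, hb, fun h => cross hji.symm a b (h.1 (hr _))⟩
  · refine ⟨p i, _, hcard i fun a _ h => ψ.injective.ne (by simp [hji.symm]) h,
      ((hSat i).map (e i)).insert hb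
        ⟨r, hri, (hr _).symm, Finset.forall_mem_map.2 fun a _ => (hr (i, a)).symm⟩ ?_⟩
    simp only [Finset.mem_map, RelEmbedding.coe_toEmbedding, forall_exists_index, and_imp]
    rintro _ a ha rfl
    exact ⟨e i (w i), hw i, fun h =>
      cross hji b (w i) (h.2 ((e i).map_adj_iff.2 (hSw i a ha)))⟩

end Hard

section LowerBound

variable {L V : Type} [DecidableEq L] {G : SimpleGraph V} {m : ℕ}

theorem Hard.le_card_of_builds [Fintype V] [Fintype L] (hG : Hard G m) {e : List (LcwOp L)}
    (he : Builds e G) : m ≤ Fintype.card L := by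
  obtain ⟨f, -, hf, -, hlt, hadj⟩ := he
  obtain ⟨p, S, rfl, hS⟩ := hG f hf
  obtain ⟨e₁, e₂, rfl, hn⟩ := exists_prefix_runLcw_n_eq e (min_le_right p (runLcw e).n)
  set s := runLcw e₁
  have hs : s.Consistent := consistent_runLcw e₁
  have hS_lt a (ha : a ∈ S) : f a < s.n := by
    have := hS.lt a ha
    have := hlt a
    omega
  by_contra! hcard
  obtain ⟨a, ha, b, hb, hab, hlab⟩ := Finset.exists_ne_map_eq_of_card_lt_of_maps_to
    (t := Finset.univ.map .some) (f := fun a => s.lab (f a)) (by simpa using hcard)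
    fun a ha => by
      obtain ⟨ℓ, hℓ⟩ := Option.isSome_iff_exists.1 ((hs.isSome_lab_iff _).2 (hS_lt a ha))
      simp [hℓ]
  obtain ⟨w, hw, hsep⟩ := hS.separated a ha b hb hab
  have hw' : s.n ≤ f w := by omega
  refine hsep ?_
  rw [hadj, hadj, runLcw_append]
  exact LcwState.foldl_adj_iff_of_lab_eq e₂ (hS_lt a ha) (hS_lt b hb) hlab
    (by have := hS_lt a ha; omega) (by have := hS_lt b hb; omega)
    (iff_of_false (fun h => by have := hs.lt_of_adj _ _ h; omega)
      fun h => by have := hs.lt_of_adj _ _ h; omega)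

theorem Hard.le_lcw [Fintype V] (hG : Hard G m) : m ≤ lcw G := by
  obtain ⟨e, he⟩ := Nat.sInf_mem (s := {k | ∃ e : List (LcwOp (Fin k)), Builds e G})
    ⟨_, exists_builds_of_embedding G (Fintype.equivFin V).toEmbedding⟩
  simpa [lcw] using hG.le_card_of_builds he

end LowerBound

theorem hard_qtG : ∀ k, Hard (qtG k) (k + 1)
  | 0 => hard_one_of_adj (G := qtG 0) (x := (0 : Fin 2)) (y := (1 : Fin 2)) (by simp [qtG])
  | k + 1 => (hard_qtG k).cone k.succ_pos (.inl ()) ((threeCopies (qtG k)).trans graphJoinInr)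
      fun _ => graphJoin_adj_inl_inr

/-- Corollary `thm-lcw-main-first-half`: the class of
quasi-threshold graphs has unbounded linear clique-width. -/
theorem statement_9 (k : ℕ) :
    ∃ (n : ℕ) (G : SimpleGraph (Fin n)), IsQuasiThreshold G ∧ k < lcw G := by
  let φ := Iso.map (Fintype.equivFin (qtV k)) (qtG k)
  exact ⟨_, _, (qtG_isQuasiThreshold k).of_embedding φ.symm.toEmbedding,
    ((hard_qtG k).of_embedding φ.toEmbedding).le_lcw⟩
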